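/- Under the assignment v(p) = 1/2, v(s) = 1, v(t) = 1/2 in V3 = {0, 1/2, 1}, using the Cooper conditional cimp, min-conjunction, Kleene negation neg(x) = 1 - x, and the Kleene biconditional bicond(x, y) = min(max(1-x, y), max(1-y, x)), each of the four Bridge premises receives a value ≥ 1/2: s, bicond(t, p), cimp(s, cimp(t, neg p)), and cimp(s, cimp(neg t, p)). Hence the premise set of the Bridge paradox is LP-satisfiable. -/
import Mathlib

theorem stmt_8 (cimp : ℚ → ℚ → ℚ)
    (hc : ∀ a b : ℚ, (a ≥ 1/2 → cimp a b = b) ∧ (a < 1/2 → cimp a b = 1/2))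
    (neg : ℚ → ℚ) (hneg : ∀ x, neg x = 1 - x)
    (bicond : ℚ → ℚ → ℚ)
    (hbic : ∀ x y, bicond x y = min (max (1 - x) y) (max (1 - y) x))
    (p s t : ℚ) (hp : p = 1/2) (hs : s = 1) (ht : t = 1/2) :
    s ≥ 1/2 ∧ bicond t p ≥ 1/2 ∧
      cimp s (cimp t (neg p)) ≥ 1/2 ∧ cimp s (cimp (neg t) p) ≥ 1/2 := by
  subst hp hs ht
  have h1 : cimp 1 (cimp (1/2 : ℚ) (neg (1/2))) = cimp (1/2 : ℚ) (neg (1/2)) :=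
    (hc 1 _).1 (by norm_num)
  have h2 : cimp (1/2 : ℚ) (neg (1/2)) = neg (1/2) := (hc (1/2) _).1 (by norm_num)
  have h3 : cimp 1 (cimp (neg (1/2 : ℚ)) (1/2)) = cimp (neg (1/2 : ℚ)) (1/2) :=
    (hc 1 _).1 (by norm_num)
  have h4 : cimp (neg (1/2 : ℚ)) (1/2) = 1/2 := (hc _ _).1 (by rw [hneg]; norm_num)
  refine ⟨by norm_num, ?_, ?_, ?_⟩
  · rw [hbic]; norm_num
  · rw [h1, h2, hneg]; norm_num
  · rw [h3, h4]
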